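/- arXiv:1102.5101 — 2 statements merged into one kernel-verified Lean document; each statement's English description precedes it below -/
import Mathlib

section
/- Let (R, m) be a Noetherian local domain, J an integrally closed m-primary ideal of R, u an element of (J : m) not in J, and set I = (J, u). Then for any finitely generated torsion-free R-module M, the length of IM/JM is at least the rank of M. -/
/- Common definitions for the formalization of
   "Bounds on the Hilbert-Kunz Multiplicity" (Celikbas–Dao–Huneke–Zhang). -/

open IsLocalRing Filter Polynomial

namespace HKPaper

universe u

variable (R : Type u) [CommRing R]

/-- The length of an `R`-module `M`: the supremum of lengths of strictly
increasing chains of submodules. -/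
noncomputable def mLength (M : Type u) [AddCommGroup M] [Module R M] : ℕ∞ :=
  (Set.univ : Set (Submodule R M)).chainHeight (· < ·)

/-- The generic rank of a module over a domain:
`dim_{Frac R} (M ⊗_R Frac R)`. -/
noncomputable def genRank [IsDomain R] (M : Type u) [AddCommGroup M] [Module R M] : ℕ :=
  Module.finrank (FractionRing R) (LocalizedModule (nonZeroDivisors R) M)

/-- `x` is integral over the ideal `I`: it satisfies an equation
`x ^ n + a 1 * x ^ (n-1) + ⋯ + a n = 0` with `a i ∈ I ^ i`. -/
def IsIntegralOverIdeal (I : Ideal R) (x : R) : Prop :=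
  ∃ n : ℕ, 0 < n ∧ ∃ a : ℕ → R, (∀ i, 1 ≤ i → i ≤ n → a i ∈ I ^ i) ∧
    x ^ n + ∑ i ∈ Finset.Icc 1 n, a i * x ^ (n - i) = 0

/-- An ideal is integrally closed if it contains every element integral over it. -/
def IdealIsIntegrallyClosed (I : Ideal R) : Prop :=
  ∀ x : R, IsIntegralOverIdeal R I x → x ∈ I

/-- `I` is primary for the maximal ideal of a local ring. -/
def IsMPrimary [IsLocalRing R] (I : Ideal R) : Prop :=
  I.radical = maximalIdeal R

/-- Minimal number of generators of a submodule. -/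
noncomputable def minGen {M : Type u} [AddCommGroup M] [Module R M] (N : Submodule R M) : ℕ :=
  sInf {n : ℕ | ∃ s : Finset M, s.card = n ∧ Submodule.span R (↑s : Set M) = N}

/-- The quotient `P/Q` of two submodules (`Q ∩ P` is divided out) as a module. -/
abbrev subQuot {M : Type u} [AddCommGroup M] [Module R M] (P Q : Submodule R M) : Type u :=
  ↥P ⧸ (Q.comap P.subtype)

/-- The Frobenius power `I^{[q]}`: the ideal generated by `q`-th powers of elements of `I`. -/
def frobPow (I : Ideal R) (q : ℕ) : Ideal R :=
  Ideal.span ((fun x => x ^ q) '' (I : Set R))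

/-- The sequence `ℓ(R/I^{[p^e]})/p^{ed}` whose limit is the Hilbert–Kunz multiplicity. -/
noncomputable def hkSeq (p d : ℕ) (I : Ideal R) (e : ℕ) : ℝ :=
  ((mLength R (R ⧸ frobPow R I (p ^ e))).toNat : ℝ) / (p : ℝ) ^ (e * d)

/-- `c` is the Hilbert–Kunz multiplicity of `I` (characteristic `p`, dimension `d`). -/
def IsHKMult (p d : ℕ) (I : Ideal R) (c : ℝ) : Prop :=
  Tendsto (hkSeq R p d I) atTop (nhds c)

/-- `c` is the Hilbert–Samuel multiplicity of `I` (dimension `d`). -/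
def IsHSMult (d : ℕ) (I : Ideal R) (c : ℝ) : Prop :=
  Tendsto (fun n : ℕ =>
    (d.factorial : ℝ) * ((mLength R (R ⧸ I ^ n)).toNat : ℝ) / (n : ℝ) ^ d) atTop (nhds c)

/-- `J` is a reduction of `I`. -/
def IsReduction (J I : Ideal R) : Prop :=
  J ≤ I ∧ ∃ k : ℕ, I ^ (k + 1) = J * I ^ k

/-- A list of elements is a system of parameters of a local ring. -/
def IsSOP [IsLocalRing R] (xs : List R) : Prop :=
  (xs.length : WithBot ℕ∞) = ringKrullDim R ∧ (∀ x ∈ xs, x ∈ maximalIdeal R) ∧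
    IsMPrimary R (Ideal.span {x | x ∈ xs})

/-- A list of elements generating a minimal reduction of the maximal ideal. -/
def IsMinimalReduction [IsLocalRing R] (xs : List R) : Prop :=
  IsSOP R xs ∧ IsReduction R (Ideal.span {x | x ∈ xs}) (maximalIdeal R)

/-- `xs` is a regular sequence on `R/I`. -/
def IsRegSeqOn : List R → Ideal R → Prop
  | [], _ => True
  | x :: xs, I => (∀ r : R, x * r ∈ I → r ∈ I) ∧ IsRegSeqOn xs (I ⊔ Ideal.span {x})

/-- A local ring is Cohen–Macaulay: some system of parameters is a regular sequence. -/
def IsCM [IsLocalRing R] : Prop :=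
  ∃ xs : List R, IsSOP R xs ∧ IsRegSeqOn R xs ⊥

/-- A local ring is Gorenstein: it is Cohen–Macaulay and the socle of an Artinian
reduction is one-dimensional, expressed via `ℓ(R/(xs:m)) + 1 = ℓ(R/(xs))`. -/
def IsGorenstein [IsLocalRing R] : Prop :=
  ∃ xs : List R, IsSOP R xs ∧ IsRegSeqOn R xs ⊥ ∧
    mLength R (R ⧸ (Submodule.colon (Ideal.span {x | x ∈ xs}) (maximalIdeal R))) + 1 =
      mLength R (R ⧸ Ideal.span {x | x ∈ xs})

/-- A local ring is regular: the maximal ideal is generated by `dim R` elements. -/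
def IsRegularLocal [IsLocalRing R] : Prop :=
  ((minGen R (maximalIdeal R) : ℕ∞) : WithBot ℕ∞) = ringKrullDim R

/-- `x` lies in the tight closure of `I`. -/
def InTightClosure (p : ℕ) (I : Ideal R) (x : R) : Prop :=
  ∃ c : R, (∀ P ∈ minimalPrimes R, c ∉ P) ∧
    ∃ e₀ : ℕ, ∀ e ≥ e₀, c * x ^ p ^ e ∈ frobPow R I (p ^ e)

/-- `R` is weakly F-regular: every ideal is tightly closed. -/
def IsWeaklyFRegular (p : ℕ) : Prop :=
  ∀ (I : Ideal R) (x : R), InTightClosure R p I x → x ∈ I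

/-- `R` is F-finite: the Frobenius endomorphism is module-finite. -/
def IsFFinite (p : ℕ) [ExpChar R p] : Prop :=
  (frobenius R p).Finite

/-- `R` viewed as a module over itself via the `e`-th iterate of Frobenius; for
`R` reduced F-finite with perfect residue field this is a model of `R^{1/p^e}`. -/
def FrobTwist (_p _e : ℕ) : Type u := R

instance (p e : ℕ) : AddCommGroup (FrobTwist R p e) :=
  inferInstanceAs (AddCommGroup R)

noncomputable instance (p e : ℕ) [ExpChar R p] : Module R (FrobTwist R p e) :=
  (Module.compHom R (iterateFrobenius R p e) : Module R R)

/-- The largest `n` such that `R^n` is a direct summand (equivalently, a linear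
surjective image) of `M`. -/
noncomputable def maxFreeRank (M : Type u) [AddCommGroup M] [Module R M] : ℕ :=
  sSup {n : ℕ | ∃ f : M →ₗ[R] (Fin n → R), Function.Surjective f}

/-- `s` is the F-signature of `R`: the limit of `a_q/q^d` where `a_q` is the maximal
rank of a free direct summand of `R^{1/q}`. -/
def IsFSignature (p d : ℕ) [ExpChar R p] (s : ℝ) : Prop :=
  Tendsto (fun e : ℕ =>
    (maxFreeRank R (FrobTwist R p e) : ℝ) / (p : ℝ) ^ (e * d)) atTop (nhds s)

/-- A maximal chain of primes between two fixed primes. -/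
def IsSaturatedChain {A : Type u} [CommRing A] (c : LTSeries (PrimeSpectrum A)) : Prop :=
  ∀ i : Fin c.length, ¬∃ r : PrimeSpectrum A, c.toFun i.castSucc < r ∧ r < c.toFun i.succ

/-- A ring is catenary: any two saturated chains of primes with the same endpoints
have the same length. -/
def IsCatenary (A : Type u) [CommRing A] : Prop :=
  ∀ c₁ c₂ : LTSeries (PrimeSpectrum A), c₁.head = c₂.head → c₁.last = c₂.last →
    IsSaturatedChain c₁ → IsSaturatedChain c₂ → c₁.length = c₂.length

/-- A (not necessarily local) ring is regular: Noetherian with all localizations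
at primes regular local rings. -/
def IsRegularRing (A : Type u) [CommRing A] : Prop :=
  IsNoetherianRing A ∧
    ∀ p : PrimeSpectrum A, IsRegularLocal (Localization.AtPrime p.asIdeal)

/-- An algebra over a field `k` is geometrically regular: it stays regular after
base change along every finite field extension of `k`. -/
def IsGeometricallyRegular (k A : Type u) [Field k] [CommRing A] [Algebra k A] : Prop :=
  ∀ (k' : Type u) [Field k'] [Algebra k k'] [Module.Finite k k'],
    IsRegularRing (TensorProduct k k' A)

/-- A Noetherian local ring is excellent: it is universally catenary and is a
G-ring, i.e. the formal fibers (the fibers of `R → R^`) are geometrically regular.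
(For Noetherian semi-local rings the J-2 condition follows from these.) -/
def IsExcellentLocal [IsLocalRing R] : Prop :=
  (∀ n : ℕ, IsCatenary (MvPolynomial (Fin n) R)) ∧
    ∀ p : PrimeSpectrum R,
      IsGeometricallyRegular (ResidueField (Localization.AtPrime p.asIdeal))
        (TensorProduct R (ResidueField (Localization.AtPrime p.asIdeal))
          (AdicCompletion (maximalIdeal R) R))

/-- A local ring is unmixed: every associated prime of the completion `R^` has
`dim R^/P = dim R`. -/
def IsUnmixed [IsLocalRing R] : Prop :=
  ∀ P ∈ associatedPrimes (AdicCompletion (maximalIdeal R) R)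
      (AdicCompletion (maximalIdeal R) R),
    ringKrullDim ((AdicCompletion (maximalIdeal R) R) ⧸ P) = ringKrullDim R


/-- A rank-one discrete valuation on a field `K` containing `S`, centered on the
ideal `mS` (in applications, the maximal ideal of the local ring `S`). -/
structure CenteredDValuation (S : Type u) [CommRing S] (mS : Ideal S)
    (K : Type u) [Field K] [Algebra S K] where
  v : K → WithTop ℤ
  map_mul' : ∀ a b : K, v (a * b) = v a + v b
  add_ge' : ∀ a b : K, min (v a) (v b) ≤ v (a + b)
  map_one' : v 1 = 0
  map_zero' : v 0 = ⊤
  ne_top' : ∀ a : K, a ≠ 0 → v a ≠ ⊤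
  nonneg' : ∀ s : S, 0 ≤ v (algebraMap S K s)
  pos' : ∀ s ∈ mS, 0 < v (algebraMap S K s)

end HKPaper

/-! Multiplication by `u` embeds `M ⧸ (JM :_M u)` into `IM/JM`, so it suffices that
`(JM :_M u)` together with fewer than `rank M` elements never generates `M`. If it did, a nonzero
functional `φ : M → Frac R` killing those elements would satisfy `u • φ(M) ⊆ J • φ(M)`; by the
determinant trick `u` would be integral over `J`, hence in `J`. -/

universe u

theorem LTSeries.length_add_one_le_chainHeight {α : Type*} [Preorder α] (p : LTSeries α) :
    (p.length + 1 : ℕ∞) ≤ (Set.univ : Set α).chainHeight (· < ·) := by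
  have hchain : IsChain (· < ·) (Set.range p) := by
    rintro _ ⟨i, rfl⟩ _ ⟨j, rfl⟩ hne
    rcases lt_or_gt_of_ne (ne_of_apply_ne p hne) with h | h
    exacts [Or.inl (p.strictMono h), Or.inr (p.strictMono h)]
  calc (p.length + 1 : ℕ∞) = ENat.card (Fin (p.length + 1)) := by simp
    _ ≤ (Set.range p).encard := p.strictMono.injective.encard_range
    _ ≤ _ := Set.encard_le_chainHeight_of_isChain _ _ (Set.subset_univ _) hchain

theorem Submodule.map_span_lt_map_span_insert {R M B : Type*} [Ring R] [AddCommGroup M]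
    [Module R M] [AddCommGroup B] [Module R B] [DecidableEq M] (f : M →ₗ[R] B) {s : Finset M}
    {y : M} (hy : y ∉ LinearMap.ker f ⊔ span R s) :
    (span R s).map f < (span R ↑(insert y s)).map f := by
  rw [SetLike.lt_iff_le_and_exists]
  refine ⟨map_mono (span_mono (by simp)), f y, mem_map_of_mem (subset_span (by simp)),
    fun hfy ↦ hy ?_⟩
  rwa [← mem_comap, comap_map_eq, sup_comm] at hfy

namespace HKPaper

section IntegralOverIdeal

variable {R : Type*} [CommRing R] {J : Ideal R} {u : R}

theorem isIntegralOverIdeal_of_monic [Nontrivial R] {p : R[X]} (hp : p.Monic)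
    (hcoeff : ∀ k, p.coeff k ∈ J ^ (p.natDegree - k)) (hu : p.eval u = 0) :
    IsIntegralOverIdeal R J u := by
  have hdeg : 0 < p.natDegree := by
    refine Nat.pos_of_ne_zero fun h ↦ ?_
    simp [hp.natDegree_eq_zero.mp h] at hu
  refine ⟨p.natDegree, hdeg, fun i ↦ p.coeff (p.natDegree - i), fun i _ hi ↦ ?_, ?_⟩
  · simpa [Nat.sub_sub_self hi] using hcoeff (p.natDegree - i)
  · rw [eval_eq_sum_range, Finset.sum_range_succ, hp.coeff_natDegree, one_mul] at hu
    have hrefl := Finset.sum_Ico_reflect (fun k ↦ p.coeff k * u ^ k) 1 (le_refl (p.natDegree + 1))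
    rw [Nat.sub_self, Nat.add_sub_cancel, ← Finset.range_eq_Ico] at hrefl
    rw [← Finset.Ico_add_one_right_eq_Icc, hrefl, add_comm, hu]

theorem isIntegralOverIdeal_of_smul_mem_smul [IsDomain R] {M : Type*} [AddCommGroup M]
    [Module R M] [Module.IsTorsionFree R M] {B : Submodule R M} (hfg : B.FG) (hB : B ≠ ⊥)
    (hu : ∀ w ∈ B, u • w ∈ J • B) : IsIntegralOverIdeal R J u := by
  obtain ⟨w, hwB, hw⟩ := B.ne_bot_iff.mp hB
  have : Module.Finite R B := Module.Finite.iff_fg.mpr hfg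
  have hrange : LinearMap.range (algebraMap R (Module.End R B) u) ≤ J • ⊤ := by
    rintro _ ⟨z, rfl⟩
    rw [Submodule.mem_smul_top_iff, Module.algebraMap_end_apply]
    exact hu z z.2
  obtain ⟨p, hp, -, hcoeff, hpu⟩ :=
    LinearMap.exists_monic_and_natDegree_eq_and_coeff_mem_pow_and_aeval_eq_zero R _ J hrange
  refine isIntegralOverIdeal_of_monic hp hcoeff ?_
  have hpw := LinearMap.congr_fun hpu ⟨w, hwB⟩
  rw [aeval_algebraMap_apply_eq_algebraMap_eval, Module.algebraMap_end_apply] at hpw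
  exact (smul_eq_zero.mp (congrArg Subtype.val hpw)).resolve_right hw

end IntegralOverIdeal

theorem exists_linearMap_fractionRing_ne_zero_of_card_lt_genRank {R M : Type u} [CommRing R]
    [IsDomain R] [AddCommGroup M] [Module R M] (s : Finset M) (hs : s.card < genRank R M) :
    ∃ φ : M →ₗ[R] FractionRing R, φ ≠ 0 ∧ Submodule.span R s ≤ LinearMap.ker φ := by
  classical
  set K := FractionRing R
  set V := LocalizedModule (nonZeroDivisors R) M
  set ι : M →ₗ[R] V := LocalizedModule.mkLinearMap (nonZeroDivisors R) M
  set W := Submodule.span K (s.image ι : Set V)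
  have hW : W < ⊤ := by
    refine lt_top_iff_ne_top.mpr fun htop ↦ hs.not_ge ?_
    calc genRank R M = Module.finrank K W := by rw [htop, finrank_top]; rfl
      _ ≤ (s.image ι).card := finrank_span_finset_le_card (s.image ι)
      _ ≤ s.card := Finset.card_image_le
  obtain ⟨f, hf, hfW⟩ := Submodule.exists_dual_map_eq_bot_of_lt_top hW inferInstance
  refine ⟨f.restrictScalars R ∘ₗ ι, fun h0 ↦ hf ?_, Submodule.span_le.mpr fun x hx ↦ ?_⟩
  · have hker : Submodule.span K (ι '' Set.univ) ≤ LinearMap.ker f :=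
      Submodule.span_le.mpr (by rintro _ ⟨m, -, rfl⟩; exact LinearMap.congr_fun h0 m)
    rwa [span_eq_top_of_isLocalizedModule K (nonZeroDivisors R) ι Submodule.span_univ, top_le_iff,
      LinearMap.ker_eq_top] at hker
  · change f (ι x) = 0
    rw [← Submodule.mem_bot K, ← hfW]
    exact Submodule.mem_map_of_mem (Submodule.subset_span (Finset.mem_image_of_mem ι hx))

theorem comap_smul_sup_span_ne_top_of_card_lt_genRank {R M : Type u} [CommRing R] [IsDomain R]
    [AddCommGroup M] [Module R M] [Module.Finite R M] {J : Ideal R}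
    (hJ : IdealIsIntegrallyClosed R J) {u : R} (hu : u ∉ J) (s : Finset M)
    (hs : s.card < genRank R M) :
    (J • ⊤ : Submodule R M).comap (LinearMap.lsmul R M u) ⊔ Submodule.span R s ≠ ⊤ := by
  set N := (J • ⊤ : Submodule R M).comap (LinearMap.lsmul R M u)
  intro htop
  obtain ⟨φ, hφ, hφs⟩ := exists_linearMap_fractionRing_ne_zero_of_card_lt_genRank s hs
  have hrange : LinearMap.range φ = N.map φ := by
    rw [LinearMap.range_eq_map, ← htop, Submodule.map_sup, LinearMap.le_ker_iff_map.mp hφs,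
      sup_bot_eq]
  refine hu (hJ u (isIntegralOverIdeal_of_smul_mem_smul (B := LinearMap.range φ) ?_
    (LinearMap.range_eq_bot.not.mpr hφ) fun w hw ↦ ?_))
  · exact LinearMap.range_eq_map φ ▸ Module.Finite.fg_top.map φ
  · rw [hrange] at hw
    obtain ⟨z, hz, rfl⟩ := hw
    rw [← map_smul, LinearMap.range_eq_map, ← Submodule.map_smul'']
    exact Submodule.mem_map_of_mem hz

/-- `mLength` counts the members of a chain, so it is one more than the usual length. -/
theorem le_mLength_of_ker_sup_span_ne_top {R B : Type u} [CommRing R] [AddCommGroup B]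
    [Module R B] {M : Type*} [AddCommGroup M] [Module R M] (f : M →ₗ[R] B) (n : ℕ)
    (h : ∀ s : Finset M, s.card < n → LinearMap.ker f ⊔ Submodule.span R s ≠ ⊤) :
    (n + 1 : ℕ∞) ≤ mLength R B := by
  classical
  suffices ∀ k ≤ n, ∃ (p : LTSeries (Submodule R B)) (s : Finset M),
      p.length = k ∧ p.last = (Submodule.span R s).map f ∧ s.card ≤ k by
    obtain ⟨p, -, hp, -⟩ := this n le_rfl
    exact hp ▸ p.length_add_one_le_chainHeight
  intro k
  induction k with
  | zero => exact fun _ ↦ ⟨RelSeries.singleton _ _, ∅, rfl, rfl, le_rfl⟩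
  | succ k ih =>
    intro hk
    obtain ⟨p, s, hp, hlast, hs⟩ := ih (Nat.le_of_succ_le hk)
    obtain ⟨y, hy⟩ := SetLike.exists_not_mem_of_ne_top _ (h s (by omega))
    refine ⟨p.snoc _ (hlast ▸ Submodule.map_span_lt_map_span_insert f hy), insert y s,
      by simp [hp], p.last_snoc .., (Finset.card_insert_le y s).trans (by omega)⟩

end HKPaper

open HKPaper IsLocalRing in
theorem statement_0_general {R : Type} [CommRing R] [IsDomain R]
    (J : Ideal R) (hJcl : IdealIsIntegrallyClosed R J)
    (u : R) (hunotJ : u ∉ J)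
    (I : Ideal R) (hI : I = J ⊔ Ideal.span {u})
    (M : Type) [AddCommGroup M] [Module R M] [Module.Finite R M] :
    (genRank R M : ℕ∞) ≤
      mLength R (subQuot R (I • (⊤ : Submodule R M)) (J • (⊤ : Submodule R M))) := by
  have huI : u ∈ I := hI ▸ Ideal.mem_sup_right (Ideal.mem_span_singleton_self u)
  let θ : M →ₗ[R] subQuot R (I • (⊤ : Submodule R M)) (J • (⊤ : Submodule R M)) :=
    Submodule.mkQ _ ∘ₗ (LinearMap.lsmul R M u).codRestrict (I • ⊤)
      fun x ↦ Submodule.smul_mem_smul huI trivial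
  have hker : LinearMap.ker θ = (J • ⊤ : Submodule R M).comap (LinearMap.lsmul R M u) := by
    ext x
    exact Submodule.Quotient.mk_eq_zero _
  calc (genRank R M : ℕ∞) ≤ genRank R M + 1 := le_self_add
    _ ≤ _ := le_mLength_of_ker_sup_span_ne_top θ _ fun s hs ↦
      hker ▸ comap_smul_sup_span_ne_top_of_card_lt_genRank hJcl hunotJ s hs

open HKPaper IsLocalRing in
/-- Proposition 2.1, rank lemma. -/
theorem statement_0 {R : Type} [CommRing R] [IsLocalRing R] [IsNoetherianRing R] [IsDomain R]
    (J : Ideal R) (hJcl : IdealIsIntegrallyClosed R J) (hJpr : IsMPrimary R J)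
    (u : R) (hu : u ∈ Submodule.colon (J : Submodule R R) (maximalIdeal R)) (hunotJ : u ∉ J)
    (I : Ideal R) (hI : I = J ⊔ Ideal.span {u})
    (M : Type) [AddCommGroup M] [Module R M] [Module.Finite R M] [NoZeroSMulDivisors R M] :
    (genRank R M : ℕ∞) ≤
      mLength R (subQuot R (I • (⊤ : Submodule R M)) (J • (⊤ : Submodule R M))) :=
  statement_0_general J hJcl u hunotJ I hI M
end

section
/- Let (R, m) be a Cohen-Macaulay normal Noetherian local domain, x ∈ m \ m² an element that is part of a system of parameters x = x_1, x_2, ..., x_d generating a minimal reduction of m, and suppose x^j ∈ the integral closure of m^n for some 1 ≤ j < n. Then x^{jl} ∈ (x_1,...,x_d)^{n(l-t)} for some fixed t and all l ≫ 0, which is impossible; hence x^j ∉ integral closure of m^n whenever j < n. -/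
/- Common definitions for the formalization of
   "Bounds on the Hilbert-Kunz Multiplicity" (Celikbas–Dao–Huneke–Zhang). -/

open IsLocalRing Filter Polynomial

/-!
If `x^j` were integral over `m^n` with `j < n`, the integral equation would give
`x^N ∈ m^(N+1)` for some `N`; passing to the reduction `J = (x, x₂, …, x_d)` of `m` gives
`x^M ∈ J^(M+1) ⊆ (x₂, …, x_d) + (x^(M+1))` for some `M`. Then `x^M (1 - r x) ∈ (x₂, …, x_d)`
with `1 - r x` a unit, so `m` is the radical of an ideal with `d - 1` generators, contradicting
Krull's height theorem.
-/

open HKPaper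

namespace Ideal

variable {R : Type*} [CommRing R]

theorem sup_pow_le_sup_pow (K P : Ideal R) : ∀ n : ℕ, (K ⊔ P) ^ n ≤ K ⊔ P ^ n
  | 0 => by simp
  | n + 1 =>
    calc (K ⊔ P) ^ (n + 1) = (K ⊔ P) ^ n * (K ⊔ P) := pow_succ _ _
      _ ≤ (K ⊔ P ^ n) * (K ⊔ P) := mul_mono_left (sup_pow_le_sup_pow K P n)
      _ ≤ K ⊔ P ^ (n + 1) := by
        rw [sup_mul, mul_sup, mul_sup, ← pow_succ]
        exact sup_le (sup_le (mul_le_right.trans le_sup_left) (mul_le_left.trans le_sup_left))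
          (sup_le (mul_le_right.trans le_sup_left) le_sup_right)

theorem pow_add_eq_pow_mul_of_pow_succ_eq {I J : Ideal R} {k : ℕ}
    (hk : I ^ (k + 1) = J * I ^ k) : ∀ s : ℕ, I ^ (k + s) = J ^ s * I ^ k
  | 0 => by simp
  | s + 1 => by
    rw [← add_assoc, pow_succ, pow_add_eq_pow_mul_of_pow_succ_eq hk s, mul_assoc, ← pow_succ,
      hk]
    ring

theorem radical_sup_span_singleton_of_mem_radical {K : Ideal R} {x : R} (hx : x ∈ K.radical) :
    (K ⊔ span {x}).radical = K.radical := by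
  refine le_antisymm ?_ (radical_mono le_sup_left)
  rw [← radical_idem K]
  exact radical_mono (sup_le le_radical ((span_singleton_le_iff_mem _).mpr hx))

end Ideal

section

variable {R : Type*} [CommRing R]

open Ideal

theorem exists_pow_mem_pow_succ_of_isIntegralOverIdeal {I : Ideal R} {x : R} {j n : ℕ}
    (hx : x ∈ I) (hjn : j < n) (h : IsIntegralOverIdeal R (I ^ n) (x ^ j)) :
    ∃ N, x ^ N ∈ I ^ (N + 1) := by
  obtain ⟨l, -, a, ha, heq⟩ := h
  refine ⟨j * l, ?_⟩
  rw [pow_mul, eq_neg_of_add_eq_zero_left heq]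
  refine neg_mem (Submodule.sum_mem _ fun i hi => ?_)
  obtain ⟨hi1, hil⟩ := Finset.mem_Icc.mp hi
  have hai : a i ∈ I ^ (n * i) := pow_mul I n i ▸ ha i hi1 hil
  have hxi : (x ^ j) ^ (l - i) ∈ I ^ (j * (l - i)) := pow_mul x j _ ▸ pow_mem_pow hx _
  refine pow_le_pow_right ?_ (pow_add I _ _ ▸ mul_mem_mul hai hxi)
  -- `i ≥ 1` and `j < n` give `n * i > j * i`, the one extra power of `I`
  have : j * i < n * i := Nat.mul_lt_mul_of_pos_right hjn hi1
  have : j * (l - i) + j * i = j * l := by rw [← Nat.mul_add, Nat.sub_add_cancel hil]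
  omega

theorem exists_pow_mem_pow_succ_of_pow_succ_eq {I J : Ideal R} {x : R} {k N : ℕ}
    (hk : I ^ (k + 1) = J * I ^ k) (hN : x ^ N ∈ I ^ (N + 1)) :
    ∃ M, x ^ M ∈ J ^ (M + 1) := by
  have hxI : (x ^ N) ^ (k + 1) ∈ I ^ (k + (N * (k + 1) + 1)) := by
    rw [show k + (N * (k + 1) + 1) = (N + 1) * (k + 1) by ring, pow_mul]
    exact pow_mem_pow hN _
  rw [pow_add_eq_pow_mul_of_pow_succ_eq hk, ← pow_mul] at hxI
  exact ⟨N * (k + 1), mul_le_left hxI⟩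

theorem IsLocalRing.mem_radical_of_pow_mem_sup_span_singleton_pow [IsLocalRing R]
    {K : Ideal R} {x : R} (hx : x ∈ maximalIdeal R) {M : ℕ}
    (h : x ^ M ∈ (K ⊔ span {x}) ^ (M + 1)) : x ∈ K.radical := by
  obtain ⟨κ, hκ, w, hw, hsum⟩ :=
    Submodule.mem_sup.mp (span_singleton_pow x (M + 1) ▸ sup_pow_le_sup_pow K _ _ h)
  obtain ⟨r, rfl⟩ := mem_span_singleton'.mp hw
  have hunit : IsUnit (1 - r * x) :=
    isUnit_one_sub_self_of_mem_nonunits _ ((mem_maximalIdeal _).mp (mul_mem_left _ r hx))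
  refine ⟨M, (mul_unit_mem_iff_mem K hunit).mp ?_⟩
  have : x ^ M * (1 - r * x) = κ := by linear_combination -hsum
  exact this ▸ hκ

theorem IsLocalRing.ringKrullDim_le_length_of_radical_span_eq [IsNoetherianRing R]
    [IsLocalRing R] (l : List R) (h : (span {y | y ∈ l}).radical = maximalIdeal R) :
    ringKrullDim R ≤ l.length := by
  classical
  have hmin : maximalIdeal R ∈ (span (l.toFinset : Set R)).minimalPrimes := by
    rw [List.coe_toFinset, ← radical_minimalPrimes, h, minimalPrimes_eq_subsingleton_self]
    rfl
  rw [← maximalIdeal_height_eq_ringKrullDim]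
  exact_mod_cast (height_le_card_of_mem_minimalPrimes_span_finset hmin).trans
    (by exact_mod_cast l.toFinset_card_le)

end

open HKPaper IsLocalRing in
theorem statement_8_general {R : Type} [CommRing R] [IsLocalRing R] [IsNoetherianRing R]
    (x : R) (hx : x ∈ maximalIdeal R)
    (hred : ∃ xs : List R, IsMinimalReduction R (x :: xs)) :
    ∀ j n : ℕ, 1 ≤ j → j < n →
      ¬ IsIntegralOverIdeal R ((maximalIdeal R) ^ n) (x ^ j) := by
  intro j n _ hjn hint
  obtain ⟨xs, ⟨hlen, -, hrad⟩, -, k, hk⟩ := hred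
  have hJ : Ideal.span {y | y ∈ x :: xs} = Ideal.span {y | y ∈ xs} ⊔ Ideal.span {x} := by
    rw [← Ideal.span_union, Set.union_comm]
    congr 1
    ext
    simp
  obtain ⟨N, hN⟩ := exists_pow_mem_pow_succ_of_isIntegralOverIdeal hx hjn hint
  obtain ⟨M, hM⟩ := exists_pow_mem_pow_succ_of_pow_succ_eq hk hN
  have hxK := mem_radical_of_pow_mem_sup_span_singleton_pow hx (hJ ▸ hM)
  have hKrad : (Ideal.span {y | y ∈ xs}).radical = maximalIdeal R := by
    rw [← Ideal.radical_sup_span_singleton_of_mem_radical hxK, ← hJ]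
    exact hrad
  have hdim := ringKrullDim_le_length_of_radical_span_eq xs hKrad
  rw [← hlen, List.length_cons] at hdim
  exact Nat.not_succ_le_self _ (by exact_mod_cast hdim)

open HKPaper IsLocalRing in
/-- x^j is not integral over m^n for j < n, x part of a minimal reduction. -/
theorem statement_8 {R : Type} [CommRing R] [IsLocalRing R] [IsNoetherianRing R] [IsDomain R]
    [IsIntegrallyClosed R] (hCM : IsCM R)
    (x : R) (hx : x ∈ maximalIdeal R) (hx2 : x ∉ maximalIdeal R ^ 2)
    (hred : ∃ xs : List R, IsMinimalReduction R (x :: xs)) :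
    ∀ j n : ℕ, 1 ≤ j → j < n →
      ¬ IsIntegralOverIdeal R ((maximalIdeal R) ^ n) (x ^ j) :=
  statement_8_general x hx hred
end
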